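/- arXiv:1803.10350 — 3 statements merged into one kernel-verified Lean document; each statement's English description precedes it below -/
import Mathlib

section
/- Suppose x₀ ∈ Ω and there exist constants q > 0, R₀, m₀, M₀ > 0 with m₀|x - x₀|^q ≤ s(x) ≤ M₀|x - x₀|^q for all |x - x₀| ≤ R₀. Then the weight w(x,y) = y^{1-2s(x)} is not in the Muckenhoupt class A₂(C), i.e., there is no constant M such that (1/|Q| ∫_Q w)(1/|Q| ∫_Q w^{-1}) ≤ M for all open cubes Q ⊂ C. -/
/-!
On the box `Q = B(x₀, r) × (δ, δ + 2r)` with `δ < r` small, the upper bound on `s` gives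
`0 ≤ 2s ≤ b := 2 M₀ r^q`, so `w ≥ y` and `w⁻¹ ≥ y^(b-1)` on `Q` (as `y ≤ 1`). The averages of
`y` and `y^(b-1)` over `(δ, δ + 2r)` are at least `r` and `((δ + 2r)^b - δ^b) / (2rb)`, and the
latter is `≥ 1 / (4rb)` once `r^b ≥ 3/4` and `δ^b ≤ 1/4`. So the A₂ product on `Q` is at least
`1 / (4b)`, which is unbounded as `r → 0`, because `b → 0` while `r^b = exp (2 M₀ r^q log r) → 1`.
-/

open MeasureTheory Set Filter Topology
open scoped ENNReal

lemma tendsto_rpow_mul_rpow_nhdsGT_zero (c : ℝ) {q : ℝ} (hq : 0 < q) :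
    Tendsto (fun r : ℝ => r ^ (c * r ^ q)) (𝓝[>] 0) (𝓝 1) := by
  have hlog : Tendsto (fun r : ℝ => c * (Real.log r * r ^ q)) (𝓝[>] 0) (𝓝 0) := by
    simpa using (tendsto_log_mul_rpow_nhdsGT_zero hq).const_mul c
  rw [← Real.exp_zero]
  refine ((Real.continuous_exp.tendsto 0).comp hlog).congr' ?_
  filter_upwards [self_mem_nhdsWithin] with r (hr : 0 < r)
  rw [Function.comp_apply, Real.rpow_def_of_pos hr (c * r ^ q)]
  ring_nf

section Averages

variable {α : Type*} [MeasurableSpace α] {μ : Measure α}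

lemma setAverage_mono_on {s : Set α} {f g : α → ℝ} (hs : MeasurableSet s)
    (hf : IntegrableOn f s μ) (hg : IntegrableOn g s μ) (hfg : ∀ x ∈ s, f x ≤ g x) :
    ⨍ x in s, f x ∂μ ≤ ⨍ x in s, g x ∂μ := by
  simp only [setAverage_eq, smul_eq_mul]
  exact mul_le_mul_of_nonneg_left (setIntegral_mono_on hf hg hs hfg)
    (inv_nonneg.2 measureReal_nonneg)

lemma integrableOn_rpow_of_mem_Icc {s : Set α} {f g : α → ℝ} (hf : Measurable f)
    (hg : Measurable g) (hs : MeasurableSet s) (hμs : μ s ≠ ∞) {δ : ℝ} (hδ : 0 < δ)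
    (hfs : ∀ x ∈ s, f x ∈ Icc δ 1) (hgs : ∀ x ∈ s, -1 ≤ g x) :
    IntegrableOn (fun x => f x ^ g x) s μ := by
  refine Measure.integrableOn_of_bounded (M := δ⁻¹) hμs
    (hf.pow hg).aestronglyMeasurable ?_
  filter_upwards [ae_restrict_mem hs] with x hx
  obtain ⟨hδf, hf1⟩ := hfs x hx
  have hfpos : 0 < f x := hδ.trans_le hδf
  calc ‖f x ^ g x‖ = f x ^ g x := Real.norm_of_nonneg (Real.rpow_nonneg hfpos.le _)
    _ ≤ f x ^ (-1 : ℝ) := Real.rpow_le_rpow_of_exponent_ge hfpos hf1 (hgs x hx)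
    _ = (f x)⁻¹ := Real.rpow_neg_one _
    _ ≤ δ⁻¹ := inv_anti₀ hδ hδf

variable [SFinite μ] {β : Type*} [MeasurableSpace β] {ν : Measure β} [SFinite ν]

lemma setAverage_prod_comp_snd {s : Set α} (t : Set β) (hμs₀ : μ s ≠ 0) (hμs : μ s ≠ ∞)
    (g : β → ℝ) : ⨍ p in s ×ˢ t, g p.2 ∂μ.prod ν = ⨍ y in t, g y ∂ν := by
  have hprod := setIntegral_prod_mul (μ := μ) (ν := ν) (fun _ => (1 : ℝ)) g s t
  simp only [one_mul, integral_const, smul_eq_mul, mul_one] at hprod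
  have hreal : μ.real s ≠ 0 := ENNReal.toReal_ne_zero.2 ⟨hμs₀, hμs⟩
  rw [setAverage_eq, setAverage_eq, hprod, measureReal_def, Measure.prod_prod,
    ENNReal.toReal_mul, ← measureReal_def, ← measureReal_def, smul_eq_mul, smul_eq_mul,
    mul_inv, measureReal_restrict_apply_univ]
  field_simp

end Averages

lemma setAverage_rpow_Ioo {a b p : ℝ} (hab : a < b) (hp : -1 < p) :
    ⨍ y in Ioo a b, y ^ p = (b ^ (p + 1) - a ^ (p + 1)) / ((p + 1) * (b - a)) := by
  rw [setAverage_eq, Real.volume_real_Ioo_of_le hab.le, smul_eq_mul,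
    ← integral_Ioc_eq_integral_Ioo, ← intervalIntegral.integral_of_le hab.le,
    integral_rpow (Or.inl hp)]
  field_simp

lemma le_setAverage_rpow_mul_setAverage_rpow_of_exponent_le {X : Type*} [MeasurableSpace X]
    {μ : Measure X} [SFinite μ] {A : Set X} (hA : MeasurableSet A) (hμA₀ : μ A ≠ 0)
    (hμA : μ A ≠ ∞) {s : X → ℝ} (hs : Measurable s) (hs01 : ∀ x ∈ A, s x ∈ Icc 0 1)
    {b c r : ℝ} (hb : 0 < b) (hsb : ∀ x ∈ A, 2 * s x ≤ b) (hr : 0 < r) (hrc : 0 < c - r)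
    (hc1 : c + r ≤ 1) :
    c * (((c + r) ^ b - (c - r) ^ b) / (b * (2 * r))) ≤
      (⨍ p in A ×ˢ Ioo (c - r) (c + r), p.2 ^ (1 - 2 * s p.1) ∂μ.prod volume) *
        ⨍ p in A ×ˢ Ioo (c - r) (c + r), p.2 ^ (2 * s p.1 - 1) ∂μ.prod volume := by
  set Q := A ×ˢ Ioo (c - r) (c + r)
  have hQ : MeasurableSet Q := hA.prod measurableSet_Ioo
  have hμQ : μ.prod volume Q ≠ ∞ := by
    rw [Measure.prod_prod]
    exact ENNReal.mul_ne_top hμA measure_Ioo_lt_top.ne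
  have hmem : ∀ p ∈ Q, p.2 ∈ Icc (c - r) 1 := fun p hp => ⟨hp.2.1.le, hp.2.2.le.trans hc1⟩
  have hint : ∀ e : X → ℝ, Measurable e → (∀ x ∈ A, -1 ≤ e x) →
      IntegrableOn (fun p : X × ℝ => p.2 ^ e p.1) Q (μ.prod volume) :=
    fun e he hle => integrableOn_rpow_of_mem_Icc measurable_snd (he.comp measurable_fst) hQ hμQ
      hrc hmem fun p hp => hle p.1 hp.1
  have havg : ∀ e : ℝ, -1 < e → ⨍ p in Q, p.2 ^ e ∂μ.prod volume =
      ((c + r) ^ (e + 1) - (c - r) ^ (e + 1)) / ((e + 1) * (2 * r)) := by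
    intro e he
    rw [setAverage_prod_comp_snd _ hμA₀ hμA (· ^ e), setAverage_rpow_Ioo (by linarith) he,
      show c + r - (c - r) = 2 * r by ring]
  have hpos : ∀ p ∈ Q, 0 < p.2 := fun p hp => hrc.trans_le (hmem p hp).1
  have hweight : c ≤ ⨍ p in Q, p.2 ^ (1 - 2 * s p.1) ∂μ.prod volume := by
    have hid : ⨍ p in Q, p.2 ^ (1 : ℝ) ∂μ.prod volume = c := by
      rw [havg 1 (by norm_num)]
      norm_num [Real.rpow_two]
      field_simp
      ring
    refine hid.ge.trans (setAverage_mono_on hQ (hint (fun _ => 1) measurable_const ?_)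
      (hint (fun x => 1 - 2 * s x) (by fun_prop) ?_) fun p hp => ?_)
    · intro x _; norm_num
    · intro x hx; linarith [(hs01 x hx).2]
    · exact Real.rpow_le_rpow_of_exponent_ge (hpos p hp) (hmem p hp).2
        (by linarith [(hs01 p.1 hp.1).1])
  have hweight_inv : ((c + r) ^ b - (c - r) ^ b) / (b * (2 * r)) ≤
      ⨍ p in Q, p.2 ^ (2 * s p.1 - 1) ∂μ.prod volume := by
    have hpow := havg (b - 1) (by linarith)
    rw [sub_add_cancel] at hpow
    refine hpow.ge.trans (setAverage_mono_on hQ (hint (fun _ => b - 1) measurable_const ?_)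
      (hint (fun x => 2 * s x - 1) (by fun_prop) ?_) fun p hp => ?_)
    · intro x _; linarith
    · intro x hx; linarith [(hs01 x hx).1]
    · exact Real.rpow_le_rpow_of_exponent_ge (hpos p hp) (hmem p hp).2
        (by linarith [hsb p.1 hp.1])
  have hgap : 0 ≤ ((c + r) ^ b - (c - r) ^ b) / (b * (2 * r)) := by
    have := Real.rpow_le_rpow hrc.le (by linarith : c - r ≤ c + r) hb.le
    exact div_nonneg (by linarith) (by positivity)
  exact mul_le_mul hweight hweight_inv hgap (by linarith)

lemma le_mul_rpow_of_mem_ball {E : Type*} [SeminormedAddCommGroup E] {s : E → ℝ} {x₀ x : E}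
    {q R₀ M₀ r : ℝ} (hq : 0 ≤ q) (hM₀ : 0 ≤ M₀) (hrR₀ : r ≤ R₀)
    (hs : ∀ x, ‖x - x₀‖ ≤ R₀ → s x ≤ M₀ * ‖x - x₀‖ ^ q) (hx : x ∈ Metric.ball x₀ r) :
    s x ≤ M₀ * r ^ q := by
  rw [Metric.mem_ball, dist_eq_norm] at hx
  calc s x ≤ M₀ * ‖x - x₀‖ ^ q := hs x (hx.le.trans hrR₀)
    _ ≤ M₀ * r ^ q := by gcongr

lemma inv_four_mul_le_setAverage_mul_setAverage_ball {N : ℕ} {s : (Fin N → ℝ) → ℝ}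
    (hs : Measurable s) {x₀ : Fin N → ℝ} {b r δ : ℝ} (hb : 0 < b) (hr : 0 < r) (hδ : 0 < δ)
    (h1 : 2 * r + δ ≤ 1) (hs01 : ∀ x ∈ Metric.ball x₀ r, s x ∈ Icc 0 1)
    (hsb : ∀ x ∈ Metric.ball x₀ r, 2 * s x ≤ b) (hrb : 3 / 4 ≤ r ^ b) (hδb : δ ^ b ≤ 1 / 4) :
    (4 * b)⁻¹ ≤ (⨍ p in Metric.ball (x₀, r + δ) r, p.2 ^ (1 - 2 * s p.1)) *
      ⨍ p in Metric.ball (x₀, r + δ) r, p.2 ^ (2 * s p.1 - 1) := by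
  have hbound := le_setAverage_rpow_mul_setAverage_rpow_of_exponent_le (μ := volume) (c := r + δ)
    Metric.isOpen_ball.measurableSet (Metric.measure_ball_pos _ _ hr).ne' measure_ball_lt_top.ne
    hs hs01 hb hsb hr (by linarith) (by linarith)
  rw [← Real.ball_eq_Ioo, ball_prod_same, ← Measure.volume_eq_prod, add_sub_cancel_left]
    at hbound
  have hrb' : 3 / 4 ≤ (r + δ + r) ^ b := hrb.trans (Real.rpow_le_rpow hr.le (by linarith) hb.le)
  calc (4 * b)⁻¹ = r * ((3 / 4 - 1 / 4) / (b * (2 * r))) := by field_simp; ring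
    _ ≤ (r + δ) * (((r + δ + r) ^ b - δ ^ b) / (b * (2 * r))) := by gcongr; linarith
    _ ≤ _ := hbound

theorem weight_not_A2_of_power_vanishing_general
    {N : ℕ} (Ω : Set (Fin N → ℝ)) (hΩopen : IsOpen Ω)
    (s : (Fin N → ℝ) → ℝ) (hs : Measurable s)
    (hs01 : ∀ x, s x ∈ Icc (0:ℝ) 1)
    (x₀ : Fin N → ℝ) (hx₀ : x₀ ∈ Ω)
    (q R₀ m₀ M₀ : ℝ) (hq : 0 < q) (hR₀ : 0 < R₀) (hM₀ : 0 < M₀)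
    (hsand : ∀ x : Fin N → ℝ, ‖x - x₀‖ ≤ R₀ →
      m₀ * ‖x - x₀‖ ^ q ≤ s x ∧ s x ≤ M₀ * ‖x - x₀‖ ^ q) :
    ¬ ∃ M : ℝ,
      ∀ (z : (Fin N → ℝ) × ℝ) (r : ℝ), 0 < r → Metric.ball z r ⊆ Ω ×ˢ Ioi (0:ℝ) →
        ((volume (Metric.ball z r)).toReal)⁻¹ *
            (∫ p in Metric.ball z r, p.2 ^ (1 - 2 * s p.1) ∂volume) *
          (((volume (Metric.ball z r)).toReal)⁻¹ *
            (∫ p in Metric.ball z r, p.2 ^ (2 * s p.1 - 1) ∂volume)) ≤ M := by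
  rintro ⟨M, hM⟩
  obtain ⟨ρ, hρ, hρΩ⟩ := Metric.isOpen_iff.1 hΩopen x₀ hx₀
  have hsmall : ∀ ε > 0, ∀ᶠ r in 𝓝[>] (0 : ℝ), r < ε := fun ε hε =>
    eventually_nhdsWithin_of_eventually_nhds (eventually_lt_nhds hε)
  have hpow : ∀ {a : ℝ}, 0 < a → Tendsto (fun r : ℝ => r ^ a) (𝓝[>] 0) (𝓝 0) := fun ha =>
    (tendsto_nhdsWithin_of_tendsto_nhds tendsto_id).rpow_const_nhds_zero ha
  have hMb : Tendsto (fun r : ℝ => M * (4 * (2 * M₀ * r ^ q))) (𝓝[>] 0) (𝓝 0) := by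
    simpa using (((hpow hq).const_mul (2 * M₀)).const_mul 4).const_mul M
  obtain ⟨r, hr, hrρ, hrR₀, hr1, hrb, hbM⟩ : ∃ r : ℝ, 0 < r ∧ r < ρ ∧ r < R₀ ∧ r < 1 / 4 ∧
      3 / 4 < r ^ (2 * M₀ * r ^ q) ∧ M * (4 * (2 * M₀ * r ^ q)) < 1 :=
    (eventually_mem_nhdsWithin.and <| (hsmall ρ hρ).and <| (hsmall R₀ hR₀).and <|
      (hsmall _ (by norm_num)).and <|
      ((tendsto_rpow_mul_rpow_nhdsGT_zero (2 * M₀) hq).eventually (lt_mem_nhds (by norm_num))).and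
      (hMb.eventually (gt_mem_nhds one_pos))).exists
  set b := 2 * M₀ * r ^ q
  have hb : 0 < b := by positivity
  obtain ⟨δ, hδ, hδr, hδb⟩ : ∃ δ : ℝ, 0 < δ ∧ δ < r ∧ δ ^ b < 1 / 4 :=
    (eventually_mem_nhdsWithin.and <| (hsmall r hr).and <|
      (hpow hb).eventually (gt_mem_nhds (by norm_num))).exists
  have hsb : ∀ x ∈ Metric.ball x₀ r, 2 * s x ≤ b := fun x hx => by
    linarith [le_mul_rpow_of_mem_ball hq.le hM₀.le hrR₀.le (fun x hx => (hsand x hx).2) hx]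
  have hQΩ : Metric.ball (x₀, r + δ) r ⊆ Ω ×ˢ Ioi 0 := by
    rw [← ball_prod_same, Real.ball_eq_Ioo, add_sub_cancel_left]
    exact prod_mono ((Metric.ball_subset_ball hrρ.le).trans hρΩ) fun y hy => hδ.trans hy.1
  have hA2 := inv_four_mul_le_setAverage_mul_setAverage_ball hs hb hr hδ (by linarith)
    (fun x _ => hs01 x) hsb hrb.le hδb.le
  simp only [setAverage_eq, smul_eq_mul, measureReal_def] at hA2
  have := (inv_le_iff_one_le_mul₀ (by positivity)).1 (hA2.trans (hM _ r hr hQΩ))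
  linarith

/-- If `s` vanishes at `x₀ ∈ Ω` at a power rate,
`m₀|x-x₀|^q ≤ s(x) ≤ M₀|x-x₀|^q` for `|x-x₀| ≤ R₀`, then the weight
`w(x,y) = y^(1-2 s x)` is NOT in the Muckenhoupt class `A₂(C)`, `C = Ω × (0,∞)`:
no constant `M` bounds the product of cube averages of `w` and `w⁻¹` over all open
cubes `Q ⊆ C` (cubes realized as sup-norm balls). -/
theorem weight_not_A2_of_power_vanishing
    {N : ℕ} (Ω : Set (Fin N → ℝ)) (hΩopen : IsOpen Ω) (hΩbdd : Bornology.IsBounded Ω)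
    (s : (Fin N → ℝ) → ℝ) (hs : Measurable s)
    (hs01 : ∀ x, s x ∈ Icc (0:ℝ) 1)
    (x₀ : Fin N → ℝ) (hx₀ : x₀ ∈ Ω)
    (q R₀ m₀ M₀ : ℝ) (hq : 0 < q) (hR₀ : 0 < R₀) (hm₀ : 0 < m₀) (hM₀ : 0 < M₀)
    (hsand : ∀ x : Fin N → ℝ, ‖x - x₀‖ ≤ R₀ →
      m₀ * ‖x - x₀‖ ^ q ≤ s x ∧ s x ≤ M₀ * ‖x - x₀‖ ^ q) :
    ¬ ∃ M : ℝ,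
      ∀ (z : (Fin N → ℝ) × ℝ) (r : ℝ), 0 < r → Metric.ball z r ⊆ Ω ×ˢ Ioi (0:ℝ) →
        ((volume (Metric.ball z r)).toReal)⁻¹ *
            (∫ p in Metric.ball z r, p.2 ^ (1 - 2 * s p.1) ∂volume) *
          (((volume (Metric.ball z r)).toReal)⁻¹ *
            (∫ p in Metric.ball z r, p.2 ^ (2 * s p.1 - 1) ∂volume)) ≤ M :=
  weight_not_A2_of_power_vanishing_general Ω hΩopen s hs hs01 x₀ hx₀ q R₀ m₀ M₀ hq hR₀ hM₀ hsand
end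

section
/- Let u be smooth on Ω × [0,∞) with finite energy ‖u‖_H² = ∫_C y^{δ(x)}(|u|² + |∇u|²) dx dy < ∞, where the zero set A₀(s) = {x : s(x) = 0} has Lebesgue measure zero. Then ∫_Ω |u(x,0)|² (1-δ(x))² dx ≤ 36 ‖u‖_H²; equivalently ‖u(·,0)‖_{L²(Ω; 4 s(x)²)} ≤ 6 ‖u‖_H. -/
open MeasureTheory Set

set_option maxHeartbeats 1000000

lemma lam_trick {a b c : ℝ} (ha : 0 ≤ a) (hb : 0 ≤ b) (hc : 0 ≤ c)
    (h : ∀ l : ℝ, 0 < l → c ≤ (l * a + b / l) / 2) : c ^ 2 ≤ a * b := by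
  rcases eq_or_lt_of_le hc with hc0 | hc0
  · nlinarith
  rcases eq_or_lt_of_le ha with ha0 | ha0
  · exfalso
    have hb1 : (0:ℝ) < b + 1 := by linarith
    have hl : 0 < (b + 1) / c := by positivity
    have h1 := h _ hl
    rw [← ha0] at h1
    have h2 : b / ((b + 1) / c) = b * c / (b + 1) := by
      field_simp
    rw [h2] at h1
    have h3 : b * c / (b + 1) ≤ c := by
      rw [div_le_iff₀ hb1]; nlinarith
    linarith
  · have hl : 0 < c / a := by positivity
    have h1 := h _ hl
    have h2 : (c / a) * a = c := div_mul_cancel₀ c (ne_of_gt ha0)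
    have h3 : b / (c / a) = b * a / c := by
      field_simp
    rw [h2, h3] at h1
    have h4 : c ≤ b * a / c := by linarith
    rw [le_div_iff₀ hc0] at h4
    nlinarith

lemma oneD {σ : ℝ} (hσ0 : 0 < σ) (hσ1 : σ ≤ 1) {w g : ℝ → ℝ}
    (hw : ∀ t, HasDerivAt w (g t) t) (hgc : Continuous g) :
    ENNReal.ofReal (4 * σ ^ 2 * w 0 ^ 2) ≤
      32 * ∫⁻ t in Ioc (0:ℝ) 1, ENNReal.ofReal ((w t ^ 2 + g t ^ 2) * t ^ (1 - 2*σ)) := by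
  set δ : ℝ := 1 - 2*σ with hδ
  have hδ1 : δ ≤ 1 := by simp only [hδ]; linarith
  have hδm1 : -1 ≤ δ := by simp only [hδ]; linarith
  have hwc : Continuous w := by
    have : Differentiable ℝ w := fun t => (hw t).differentiableAt
    exact this.continuous
  set E := ∫⁻ t in Ioc (0:ℝ) 1, ENNReal.ofReal ((w t ^ 2 + g t ^ 2) * t ^ δ) with hEdef
  by_cases hE : E = ⊤
  · rw [hE, ENNReal.mul_top (by norm_num)]
    exact le_top
  -- measurability
  have hrm : Measurable (fun t : ℝ => t ^ δ) := measurable_id.pow measurable_const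
  have hhm : Measurable (fun t : ℝ => (w t ^ 2 + g t ^ 2) * t ^ δ) :=
    (((hwc.pow 2).add (hgc.pow 2)).measurable).mul hrm
  have hwm : Measurable (fun t : ℝ => w t ^ 2 * t ^ δ) := ((hwc.pow 2).measurable).mul hrm
  have hgm : Measurable (fun t : ℝ => g t ^ 2 * t ^ δ) := ((hgc.pow 2).measurable).mul hrm
  have hnn : ∀ t ∈ Ioc (0:ℝ) 1, 0 ≤ (w t ^ 2 + g t ^ 2) * t ^ δ := fun t ht =>
    mul_nonneg (by positivity) (Real.rpow_nonneg ht.1.le _)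
  have hnn' : ∀ᵐ t ∂(volume.restrict (Ioc (0:ℝ) 1)), 0 ≤ (w t ^ 2 + g t ^ 2) * t ^ δ := by
    rw [ae_restrict_iff' measurableSet_Ioc]; exact ae_of_all _ hnn
  -- integrability of the energy density on (0,1]
  have hIh : IntegrableOn (fun t => (w t ^ 2 + g t ^ 2) * t ^ δ) (Ioc (0:ℝ) 1) := by
    refine ⟨hhm.aestronglyMeasurable, ?_⟩
    rw [hasFiniteIntegral_iff_ofReal hnn']
    exact lt_of_le_of_ne le_top hE
  have hIw : IntegrableOn (fun t => w t ^ 2 * t ^ δ) (Ioc (0:ℝ) 1) := by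
    refine Integrable.mono hIh hwm.aestronglyMeasurable ?_
    rw [ae_restrict_iff' measurableSet_Ioc]
    refine ae_of_all _ fun t ht => ?_
    have h1 : (0:ℝ) ≤ t ^ δ := Real.rpow_nonneg ht.1.le _
    rw [Real.norm_eq_abs, Real.norm_eq_abs, abs_of_nonneg (by positivity),
      abs_of_nonneg (hnn t ht)]
    nlinarith [sq_nonneg (g t)]
  have hIg : IntegrableOn (fun t => g t ^ 2 * t ^ δ) (Ioc (0:ℝ) 1) := by
    refine Integrable.mono hIh hgm.aestronglyMeasurable ?_
    rw [ae_restrict_iff' measurableSet_Ioc]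
    refine ae_of_all _ fun t ht => ?_
    have h1 : (0:ℝ) ≤ t ^ δ := Real.rpow_nonneg ht.1.le _
    rw [Real.norm_eq_abs, Real.norm_eq_abs, abs_of_nonneg (by positivity),
      abs_of_nonneg (hnn t ht)]
    nlinarith [sq_nonneg (w t)]
  set A := ∫ t in Ioc (0:ℝ) 1, w t ^ 2 * t ^ δ with hAdef
  set D := ∫ t in Ioc (0:ℝ) 1, g t ^ 2 * t ^ δ with hDdef
  have hA0 : 0 ≤ A := setIntegral_nonneg measurableSet_Ioc fun t ht =>
    mul_nonneg (by positivity) (Real.rpow_nonneg ht.1.le _)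
  have hD0 : 0 ≤ D := setIntegral_nonneg measurableSet_Ioc fun t ht =>
    mul_nonneg (by positivity) (Real.rpow_nonneg ht.1.le _)
  have hADE : A + D = E.toReal := by
    have h1 : ∫ t in Ioc (0:ℝ) 1, (w t ^ 2 + g t ^ 2) * t ^ δ = A + D := by
      rw [hAdef, hDdef, ← integral_add hIw hIg]
      exact setIntegral_congr_fun measurableSet_Ioc fun t _ => by ring
    rw [← h1, integral_eq_lintegral_of_nonneg_ae hnn' hhm.aestronglyMeasurable.restrict]
  -- the rpow weight t ^ (2σ - 1)
  have hIr : IntegrableOn (fun t : ℝ => t ^ (2*σ - 1)) (Ioc (0:ℝ) 1) := by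
    rw [← intervalIntegrable_iff_integrableOn_Ioc_of_le (by norm_num : (0:ℝ) ≤ 1)]
    exact intervalIntegral.intervalIntegrable_rpow' (by linarith)
  have hKval : ∫ t in Ioc (0:ℝ) 1, t ^ (2*σ - 1) = 1 / (2*σ) := by
    rw [← intervalIntegral.integral_of_le (by norm_num : (0:ℝ) ≤ 1)]
    rw [integral_rpow (Or.inl (by linarith))]
    have h2σ : 2*σ - 1 + 1 = 2*σ := by ring
    rw [h2σ, Real.one_rpow, Real.zero_rpow (by positivity)]
    ring
  have hK0 : (0:ℝ) ≤ 1/(2*σ) := by positivity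
  -- Cauchy–Schwarz via the λ-trick
  set I := ∫ t in Ioc (0:ℝ) 1, |g t| with hIdef
  have hIabs : IntegrableOn (fun t => |g t|) (Ioc (0:ℝ) 1) := hgc.abs.integrableOn_Ioc
  have hI0 : 0 ≤ I := setIntegral_nonneg measurableSet_Ioc fun t _ => abs_nonneg _
  have hCS : I ^ 2 ≤ D * (1/(2*σ)) := by
    refine lam_trick hD0 hK0 hI0 fun l hl => ?_
    have hptw : ∀ t ∈ Ioc (0:ℝ) 1,
        |g t| ≤ (l * (g t ^ 2 * t ^ δ) + t ^ (2*σ - 1) / l) / 2 := by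
      intro t ht
      have htpos : 0 < t := ht.1
      have hP : 0 < t ^ δ := Real.rpow_pos_of_pos htpos _
      have hQ : 0 < t ^ (2*σ - 1) := Real.rpow_pos_of_pos htpos _
      have hPQ : t ^ δ * t ^ (2*σ - 1) = 1 := by
        rw [← Real.rpow_add htpos]
        have h0 : δ + (2*σ - 1) = 0 := by rw [hδ]; ring
        rw [h0, Real.rpow_zero]
      have e1 : 2 * (l * |g t| * t ^ δ) ≤ l^2 * |g t|^2 * (t ^ δ)^2 + 1 := by
        nlinarith [sq_nonneg (l * |g t| * t ^ δ - 1)]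
      have e2 := mul_le_mul_of_nonneg_right e1 hQ.le
      have lhs_eq : 2 * (l * |g t| * t ^ δ) * t ^ (2*σ - 1) = 2 * l * |g t| := by
        have : 2 * (l * |g t| * t ^ δ) * t ^ (2*σ - 1)
            = 2 * l * |g t| * (t ^ δ * t ^ (2*σ - 1)) := by ring
        rw [this, hPQ, mul_one]
      have rhs_eq : (l^2 * |g t|^2 * (t ^ δ)^2 + 1) * t ^ (2*σ - 1)
          = l^2 * |g t|^2 * t ^ δ + t ^ (2*σ - 1) := by
        have : (l^2 * |g t|^2 * (t ^ δ)^2 + 1) * t ^ (2*σ - 1)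
            = l^2 * |g t|^2 * t ^ δ * (t ^ δ * t ^ (2*σ - 1)) + t ^ (2*σ - 1) := by ring
        rw [this, hPQ, mul_one]
      rw [lhs_eq, rhs_eq] at e2
      have e3 : l * (2 * |g t|) ≤ l * ((l * (g t ^ 2 * t ^ δ) + t ^ (2*σ - 1) / l) / 2 * 2) := by
        have h5 : l * ((l * (g t ^ 2 * t ^ δ) + t ^ (2*σ - 1) / l) / 2 * 2)
            = l^2 * (g t ^ 2) * t ^ δ + t ^ (2*σ - 1) := by
          field_simp
        rw [h5, ← sq_abs (g t)]
        linarith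
      have e4 := le_of_mul_le_mul_left e3 hl
      linarith
    have hint : I ≤ ∫ t in Ioc (0:ℝ) 1, (l * (g t ^ 2 * t ^ δ) + t ^ (2*σ - 1) / l) / 2 := by
      refine setIntegral_mono_on hIabs ?_ measurableSet_Ioc hptw
      exact ((hIg.const_mul l).add (hIr.div_const l)).div_const 2
    calc I ≤ ∫ t in Ioc (0:ℝ) 1, (l * (g t ^ 2 * t ^ δ) + t ^ (2*σ - 1) / l) / 2 := hint
      _ = (l * D + (1/(2*σ)) / l) / 2 := by
          rw [integral_div, integral_add (hIg.const_mul l) (hIr.div_const l),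
            integral_const_mul, integral_div, hKval]
  -- FTC + pointwise bound for y ∈ (1/2, 1]
  have hptY : ∀ y ∈ Ioc (1/2:ℝ) 1, w 0 ^ 2 ≤ 2 * w y ^ 2 + 2 * I ^ 2 := by
    intro y hy
    have hy0 : (0:ℝ) ≤ y := by linarith [hy.1]
    have hftc : ∫ t in (0:ℝ)..y, g t = w y - w 0 :=
      intervalIntegral.integral_eq_sub_of_hasDerivAt (fun t _ => hw t)
        (hgc.intervalIntegrable 0 y)
    have habs : |∫ t in (0:ℝ)..y, g t| ≤ ∫ t in (0:ℝ)..y, |g t| :=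
      intervalIntegral.abs_integral_le_integral_abs hy0
    have heq : ∫ t in (0:ℝ)..y, |g t| = ∫ t in Ioc (0:ℝ) y, |g t| :=
      intervalIntegral.integral_of_le hy0
    have hsub : ∫ t in Ioc (0:ℝ) y, |g t| ≤ I := by
      refine setIntegral_mono_set hIabs ?_ ?_
      · exact Filter.Eventually.of_forall fun t => abs_nonneg _
      · exact HasSubset.Subset.eventuallyLE (Ioc_subset_Ioc le_rfl hy.2)
    have h2 : w 0 = w y - ∫ t in (0:ℝ)..y, g t := by rw [hftc]; ring
    have h3 : |w 0| ≤ |w y| + |∫ t in (0:ℝ)..y, g t| := by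
      rw [h2]; exact abs_sub _ _
    have h4 : |∫ t in (0:ℝ)..y, g t| ≤ I := by
      refine habs.trans ?_
      rw [heq]; exact hsub
    have h1 : |w 0| ≤ |w y| + I := by linarith
    nlinarith [sq_abs (w 0), sq_abs (w y), abs_nonneg (w 0), abs_nonneg (w y), hI0,
      sq_nonneg (|w y| - I)]
  -- weight bounds on (1/2, 1]
  have hwt : ∀ y ∈ Ioc (1/2:ℝ) 1, (1/2:ℝ) ≤ y ^ δ ∧ y ^ δ ≤ 2 := by
    intro y hy
    have hy0 : (0:ℝ) < y := by linarith [hy.1]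
    constructor
    · have h1 : y ^ (1:ℝ) ≤ y ^ δ := Real.rpow_le_rpow_of_exponent_ge hy0 hy.2 hδ1
      rw [Real.rpow_one] at h1
      linarith [hy.1]
    · have h1 : y ^ δ ≤ y ^ (-1:ℝ) := Real.rpow_le_rpow_of_exponent_ge hy0 hy.2 hδm1
      have h2 : y ^ (-1:ℝ) = y⁻¹ := Real.rpow_neg_one y
      rw [h2] at h1
      have h3 : y⁻¹ ≤ 2 := by
        rw [inv_le_comm₀ hy0 (by norm_num)]
        linarith [hy.1]
      linarith
  -- integrability on (1/2, 1]
  have hcw : ContinuousOn (fun y : ℝ => y ^ δ) (Icc (1/2:ℝ) 1) := by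
    intro y hy
    exact (Real.continuousAt_rpow_const y δ (Or.inl (by linarith [hy.1]))).continuousWithinAt
  have hIw2 : IntegrableOn (fun y : ℝ => w 0 ^ 2 * y ^ δ) (Ioc (1/2:ℝ) 1) :=
    ((continuousOn_const.mul hcw).integrableOn_Icc).mono_set Ioc_subset_Icc_self
  have hIrhs : IntegrableOn (fun y : ℝ => (2 * w y ^ 2 + 2 * I ^ 2) * y ^ δ) (Ioc (1/2:ℝ) 1) :=
    ((((hwc.pow 2).continuousOn.const_smul (2:ℝ)).add
      continuousOn_const).mul hcw).integrableOn_Icc.mono_set Ioc_subset_Icc_self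
  have hconst : ∀ c : ℝ, IntegrableOn (fun _ : ℝ => c) (Ioc (1/2:ℝ) 1) := fun c =>
    integrableOn_const (by rw [Real.volume_Ioc]; exact ENNReal.ofReal_ne_top)
  have hmeasI : (volume (Ioc (1/2:ℝ) 1)).toReal = 1/2 := by
    rw [Real.volume_Ioc, ENNReal.toReal_ofReal (by norm_num)]; norm_num
  have hsetI : ∀ c : ℝ, ∫ _ in Ioc (1/2:ℝ) 1, c = c / 2 := by
    intro c
    rw [setIntegral_const, measureReal_def, hmeasI, smul_eq_mul]; ring
  have hlow : w 0 ^ 2 / 4 ≤ ∫ y in Ioc (1/2:ℝ) 1, w 0 ^ 2 * y ^ δ := by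
    have h1 : ∫ _ in Ioc (1/2:ℝ) 1, (w 0 ^ 2 * (1/2:ℝ)) = w 0 ^ 2 / 4 := by
      rw [hsetI]; ring
    rw [← h1]
    refine setIntegral_mono_on (hconst _) hIw2 measurableSet_Ioc ?_
    intro y hy
    exact mul_le_mul_of_nonneg_left (hwt y hy).1 (sq_nonneg _)
  have hstep : ∫ y in Ioc (1/2:ℝ) 1, w 0 ^ 2 * y ^ δ ≤
      ∫ y in Ioc (1/2:ℝ) 1, (2 * w y ^ 2 + 2 * I ^ 2) * y ^ δ := by
    refine setIntegral_mono_on hIw2 hIrhs measurableSet_Ioc fun y hy => ?_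
    have h1 : (0:ℝ) ≤ y ^ δ := by linarith [(hwt y hy).1]
    exact mul_le_mul_of_nonneg_right (hptY y hy) h1
  have hup : ∫ y in Ioc (1/2:ℝ) 1, (2 * w y ^ 2 + 2 * I ^ 2) * y ^ δ ≤ 2 * A + 2 * I ^ 2 := by
    have hIa : IntegrableOn (fun y : ℝ => w y ^ 2 * y ^ δ) (Ioc (1/2:ℝ) 1) :=
      hIw.mono_set (Ioc_subset_Ioc (by norm_num) le_rfl)
    have hIb : IntegrableOn (fun y : ℝ => (2 * I ^ 2) * y ^ δ) (Ioc (1/2:ℝ) 1) :=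
      ((continuousOn_const.mul hcw).integrableOn_Icc).mono_set Ioc_subset_Icc_self
    have hsplit : ∫ y in Ioc (1/2:ℝ) 1, (2 * w y ^ 2 + 2 * I ^ 2) * y ^ δ =
        2 * (∫ y in Ioc (1/2:ℝ) 1, w y ^ 2 * y ^ δ) +
          ∫ y in Ioc (1/2:ℝ) 1, (2 * I ^ 2) * y ^ δ := by
      rw [← integral_const_mul, ← integral_add (hIa.const_mul 2) hIb]
      exact setIntegral_congr_fun measurableSet_Ioc fun y _ => by ring
    rw [hsplit]
    have h1 : ∫ y in Ioc (1/2:ℝ) 1, w y ^ 2 * y ^ δ ≤ A := by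
      refine setIntegral_mono_set hIw ?_ ?_
      · filter_upwards [ae_restrict_mem measurableSet_Ioc] with t ht
        exact mul_nonneg (sq_nonneg _) (Real.rpow_nonneg ht.1.le _)
      · exact HasSubset.Subset.eventuallyLE (Ioc_subset_Ioc (by norm_num) le_rfl)
    have h2 : ∫ y in Ioc (1/2:ℝ) 1, (2 * I ^ 2) * y ^ δ ≤ 2 * I ^ 2 := by
      have hb : ∫ _ in Ioc (1/2:ℝ) 1, ((2 * I ^ 2) * (2:ℝ)) = 2 * I ^ 2 := by
        rw [hsetI]; ring
      refine le_trans ?_ (le_of_eq hb)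
      refine setIntegral_mono_on hIb (hconst _) measurableSet_Ioc fun y hy => ?_
      exact mul_le_mul_of_nonneg_left (hwt y hy).2 (by positivity)
    linarith
  -- put it together: the real inequality
  have hmain : w 0 ^ 2 / 4 ≤ 2 * A + 2 * I ^ 2 := le_trans hlow (le_trans hstep hup)
  have hCS' : I ^ 2 * (2 * σ) ≤ D := by
    have h6 := mul_le_mul_of_nonneg_right hCS (by positivity : (0:ℝ) ≤ 2 * σ)
    calc I ^ 2 * (2*σ) ≤ D * (1/(2*σ)) * (2*σ) := h6
      _ = D := by field_simp
  have hfinal : 4 * σ ^ 2 * w 0 ^ 2 ≤ 32 * E.toReal := by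
    rw [← hADE]
    have hσ2 : σ ^ 2 ≤ 1 := by nlinarith
    nlinarith [mul_le_mul_of_nonneg_left hmain (by positivity : (0:ℝ) ≤ 16 * σ ^ 2),
      mul_le_mul_of_nonneg_left hCS' (by positivity : (0:ℝ) ≤ 16 * σ),
      mul_nonneg hA0 (sq_nonneg σ), sq_nonneg I,
      mul_nonneg (mul_nonneg (by norm_num : (0:ℝ) ≤ 32) hσ0.le) (sq_nonneg I)]
  calc ENNReal.ofReal (4 * σ ^ 2 * w 0 ^ 2) ≤ ENNReal.ofReal (32 * E.toReal) :=
        ENNReal.ofReal_le_ofReal hfinal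
    _ = 32 * E := by
        rw [ENNReal.ofReal_mul (by norm_num), ENNReal.ofReal_toReal hE, ENNReal.ofReal_ofNat]

/-- integrated trace inequality.  For `u` smooth up to the boundary of
`C = Ω × (0,∞)` with finite weighted energy
`‖u‖_H² = ∫_C y^δ(x) (|u|² + |∇u|²)`, where `δ = 1 - 2s` and the zero set of `s` is null,
one has `∫_Ω |u(x,0)|² (1-δ(x))² dx ≤ 36 ‖u‖_H²` (note `(1-δ)² = 4 s²`). -/
theorem integrated_trace_inequality
    {N : ℕ} (Ω : Set (Fin N → ℝ)) (hΩopen : IsOpen Ω) (hΩbdd : Bornology.IsBounded Ω)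
    (s : (Fin N → ℝ) → ℝ) (hs : Measurable s) (hs01 : ∀ x, s x ∈ Icc (0:ℝ) 1)
    (hszero : volume {x ∈ Ω | s x = 0} = 0)
    (u : ((Fin N → ℝ) × ℝ) → ℝ) (hu : ContDiff ℝ (⊤ : ℕ∞) u)
    (henergy : IntegrableOn
      (fun p => ((u p) ^ 2 + ‖fderiv ℝ u p‖ ^ 2) * p.2 ^ (1 - 2 * s p.1))
      (Ω ×ˢ Ioi (0:ℝ)) volume) :
    (∫ x in Ω, (u (x, 0)) ^ 2 * (1 - (1 - 2 * s x)) ^ 2) ≤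
      36 * ∫ p in Ω ×ˢ Ioi (0:ℝ),
        ((u p) ^ 2 + ‖fderiv ℝ u p‖ ^ 2) * p.2 ^ (1 - 2 * s p.1) := by
  have hu_c : Continuous u := hu.continuous
  have hfd_c : Continuous (fun p => fderiv ℝ u p) := hu.continuous_fderiv (by simp)
  have hΩm : MeasurableSet Ω := hΩopen.measurableSet
  have hSm : MeasurableSet (Ω ×ˢ Ioi (0:ℝ)) := hΩm.prod measurableSet_Ioi
  have hGm : Measurable (fun p : (Fin N → ℝ) × ℝ =>
      ((u p) ^ 2 + ‖fderiv ℝ u p‖ ^ 2) * p.2 ^ (1 - 2 * s p.1)) := by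
    refine (((hu_c.pow 2).add ((hfd_c.norm).pow 2)).measurable).mul ?_
    exact measurable_snd.pow (measurable_const.sub ((hs.comp measurable_fst).const_mul 2))
  -- nonnegativity of the energy density on the cylinder
  have hGnn : ∀ᵐ p ∂(volume.restrict (Ω ×ˢ Ioi (0:ℝ))),
      0 ≤ ((u p) ^ 2 + ‖fderiv ℝ u p‖ ^ 2) * p.2 ^ (1 - 2 * s p.1) := by
    filter_upwards [ae_restrict_mem hSm] with p hp
    exact mul_nonneg (by positivity) (Real.rpow_nonneg (le_of_lt hp.2) _)
  set R := ∫⁻ p in Ω ×ˢ Ioi (0:ℝ),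
      ENNReal.ofReal (((u p) ^ 2 + ‖fderiv ℝ u p‖ ^ 2) * p.2 ^ (1 - 2 * s p.1)) with hRdef
  have hRHSrepr : ∫ p in Ω ×ˢ Ioi (0:ℝ),
      ((u p) ^ 2 + ‖fderiv ℝ u p‖ ^ 2) * p.2 ^ (1 - 2 * s p.1) = R.toReal :=
    integral_eq_lintegral_of_nonneg_ae hGnn hGm.aestronglyMeasurable.restrict
  have hRfin : R ≠ ⊤ := by
    have h1 := henergy.2
    rw [hasFiniteIntegral_iff_ofReal hGnn] at h1
    exact ne_of_lt h1
  -- LHS representation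
  have hFm : Measurable (fun x : Fin N → ℝ => (u (x, 0)) ^ 2 * (1 - (1 - 2 * s x)) ^ 2) := by
    refine ((hu_c.comp (continuous_id.prodMk continuous_const)).pow 2).measurable.mul ?_
    exact (measurable_const.sub (measurable_const.sub (hs.const_mul 2))).pow measurable_const
  have hLHSrepr : (∫ x in Ω, (u (x, 0)) ^ 2 * (1 - (1 - 2 * s x)) ^ 2) =
      (∫⁻ x in Ω, ENNReal.ofReal ((u (x, 0)) ^ 2 * (1 - (1 - 2 * s x)) ^ 2)).toReal :=
    integral_eq_lintegral_of_nonneg_ae (ae_of_all _ fun x => by positivity)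
      hFm.aestronglyMeasurable.restrict
  set L := ∫⁻ x in Ω, ENNReal.ofReal ((u (x, 0)) ^ 2 * (1 - (1 - 2 * s x)) ^ 2) with hLdef
  -- a.e. positivity of s on Ω
  have haeS : ∀ᵐ x ∂(volume.restrict Ω), 0 < s x := by
    have hset : volume.restrict Ω {x | s x = 0} = 0 := by
      rw [Measure.restrict_apply (show MeasurableSet {x | s x = 0} from hs (measurableSet_singleton 0))]
      rw [show {x | s x = 0} ∩ Ω = {x ∈ Ω | s x = 0} by ext x; simp [and_comm]]
      exact hszero
    have h1 : ∀ᵐ x ∂(volume.restrict Ω), s x ≠ 0 := by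
      rw [ae_iff]
      simpa using hset
    filter_upwards [h1] with x hx
    exact lt_of_le_of_ne (hs01 x).1 (Ne.symm hx)
  -- pointwise (in x) trace inequality from the 1D lemma
  have hkey : ∀ x : Fin N → ℝ, 0 < s x →
      ENNReal.ofReal ((u (x, 0)) ^ 2 * (1 - (1 - 2 * s x)) ^ 2) ≤
        32 * ∫⁻ y in Ioi (0:ℝ),
          ENNReal.ofReal (((u (x, y)) ^ 2 + ‖fderiv ℝ u (x, y)‖ ^ 2) * y ^ (1 - 2 * s x)) := by
    intro x hsx
    set w : ℝ → ℝ := fun y => u (x, y) with hwdef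
    set g : ℝ → ℝ := fun y => fderiv ℝ u (x, y) ((0 : Fin N → ℝ), (1:ℝ)) with hgdef
    have hw : ∀ t, HasDerivAt w (g t) t := by
      intro t
      have hdu := (hu.differentiable (by simp) (x, t)).hasFDerivAt
      have hline : HasDerivAt (fun y : ℝ => ((x, y) : (Fin N → ℝ) × ℝ))
          ((0 : Fin N → ℝ), (1:ℝ)) t := (hasDerivAt_const t x).prodMk (hasDerivAt_id t)
      exact hdu.comp_hasDerivAt t hline
    have hgc : Continuous g :=
      (hfd_c.comp (continuous_const.prodMk continuous_id)).clm_apply continuous_const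
    have h1 := oneD hsx (hs01 x).2 hw hgc
    have hF : (u (x, 0)) ^ 2 * (1 - (1 - 2 * s x)) ^ 2 = 4 * (s x) ^ 2 * w 0 ^ 2 := by
      simp only [hwdef]; ring
    rw [hF]
    refine h1.trans ?_
    refine mul_le_mul_right ?_ _
    refine le_trans (lintegral_mono_ae ?_) (lintegral_mono_set Ioc_subset_Ioi_self)
    filter_upwards [ae_restrict_mem measurableSet_Ioc] with t ht
    refine ENNReal.ofReal_le_ofReal ?_
    refine mul_le_mul_of_nonneg_right ?_ (Real.rpow_nonneg ht.1.le _)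
    have hgb : |g t| ≤ ‖fderiv ℝ u (x, t)‖ := by
      have h2 := (fderiv ℝ u (x, t)).le_opNorm ((0 : Fin N → ℝ), (1:ℝ))
      have h3 : ‖((0 : Fin N → ℝ), (1:ℝ))‖ = 1 := by
        rw [Prod.norm_def]; simp
      rw [h3, mul_one] at h2
      simpa [hgdef, Real.norm_eq_abs] using h2
    have h4 : g t ^ 2 ≤ ‖fderiv ℝ u (x, t)‖ ^ 2 := by
      nlinarith [abs_nonneg (g t), sq_abs (g t), norm_nonneg (fderiv ℝ u (x, t))]
    simp only [hwdef]
    linarith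
  -- Tonelli
  have hTon : ∫⁻ x in Ω, (∫⁻ y in Ioi (0:ℝ),
      ENNReal.ofReal (((u (x, y)) ^ 2 + ‖fderiv ℝ u (x, y)‖ ^ 2) * y ^ (1 - 2 * s x))) = R := by
    rw [hRdef]
    have h1 : (volume : Measure ((Fin N → ℝ) × ℝ)).restrict (Ω ×ˢ Ioi (0:ℝ)) =
        ((volume : Measure (Fin N → ℝ)).restrict Ω).prod
          ((volume : Measure ℝ).restrict (Ioi (0:ℝ))) := by
      rw [Measure.prod_restrict, ← Measure.volume_eq_prod]
    rw [h1, lintegral_prod _ (hGm.ennreal_ofReal.aemeasurable)]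
  have hmain : L ≤ 36 * R := by
    have h1 : L ≤ ∫⁻ x in Ω, 32 * (∫⁻ y in Ioi (0:ℝ),
        ENNReal.ofReal (((u (x, y)) ^ 2 + ‖fderiv ℝ u (x, y)‖ ^ 2) * y ^ (1 - 2 * s x))) := by
      refine lintegral_mono_ae ?_
      filter_upwards [haeS] with x hx
      exact hkey x hx
    rw [lintegral_const_mul' _ _ (by norm_num : (32:ENNReal) ≠ ⊤), hTon] at h1
    exact h1.trans (mul_le_mul_left (by norm_num) R)
  have h36fin : (36:ENNReal) * R ≠ ⊤ := ENNReal.mul_ne_top (by norm_num) hRfin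
  rw [hLHSrepr, hRHSrepr, ← ENNReal.toReal_ofNat (n := 36), ← ENNReal.toReal_mul]
  exact ENNReal.toReal_mono h36fin hmain
end

section
/- Define w(x,y) on ℝ × (0,∞) by w(x,y) = 0 for x < -√y, w(x,y) = (x + √y)/(2√y) for |x| ≤ √y, and w(x,y) = 1 for x > √y. Then for any κ ∈ (0, 1/4) and ε > 0, ∫_{|x|<ε} ∫₀^1 y^{1-2κ} |∇w(x,y)|² dy dx < ∞. -/
/-! On the open wedge `|x| < √y` the function is `x/(2√y) + 1/2`, whose gradient has size at
most `1/y` when `y ≤ 1`; off the closed wedge it is locally constant, and the boundary `|x| = √y`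
meets each horizontal line in two points only. Hence for `y ∈ (0,1)` the `x`-integral of
`y^(1-2κ) |∇w|²` is at most `2√y · y^(-1-2κ) = 2 y^(-1/2-2κ)`, which is integrable on `(0,1)`
because `κ < 1/4`. -/

open MeasureTheory Set

/-- The piecewise function of Example `exampledisc`: `w(x,y) = 0` for `x < -√y`,
`(x+√y)/(2√y)` for `|x| ≤ √y`, and `1` for `x > √y`. -/
noncomputable def wEx (p : ℝ × ℝ) : ℝ :=
  if p.1 < -Real.sqrt p.2 then 0
  else if Real.sqrt p.2 < p.1 then 1
  else (p.1 + Real.sqrt p.2) / (2 * Real.sqrt p.2)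

open Topology ContinuousLinearMap Real

lemma norm_smul_fst_add_smul_snd_le {𝕜 E : Type*} [NontriviallyNormedField 𝕜]
    [SeminormedAddCommGroup E] [NormedSpace 𝕜 E] (a b : 𝕜) :
    ‖a • fst 𝕜 E E + b • snd 𝕜 E E‖ ≤ ‖a‖ + ‖b‖ :=
  calc ‖a • fst 𝕜 E E + b • snd 𝕜 E E‖ ≤ ‖a‖ * ‖fst 𝕜 E E‖ + ‖b‖ * ‖snd 𝕜 E E‖ :=
        (norm_add_le _ _).trans
          (add_le_add (norm_smul_le a (fst 𝕜 E E)) (norm_smul_le b (snd 𝕜 E E)))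
    _ ≤ ‖a‖ * 1 + ‖b‖ * 1 := by gcongr <;> simp only [norm_fst_le, norm_snd_le]
    _ = ‖a‖ + ‖b‖ := by ring

lemma hasFDerivAt_fst_mul_comp_snd {h : ℝ → ℝ} {h' : ℝ} {p : ℝ × ℝ}
    (hh : HasDerivAt h h' p.2) :
    HasFDerivAt (fun q : ℝ × ℝ => q.1 * h q.2)
      (h p.2 • fst ℝ ℝ ℝ + (p.1 * h') • snd ℝ ℝ ℝ) p := by
  refine (hasFDerivAt_fst.mul
    (HasDerivAt.comp_hasFDerivAt (𝕜 := ℝ) p hh hasFDerivAt_snd)).congr_fderiv ?_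
  rw [add_comm, mul_smul]
  rfl

lemma wEx_eventuallyEq_zero {p : ℝ × ℝ} (h : p.1 < -√p.2) : wEx =ᶠ[𝓝 p] fun _ => 0 := by
  filter_upwards [(isOpen_lt continuous_fst (continuous_sqrt.comp continuous_snd).neg).mem_nhds h]
    with q (hq : q.1 < -√q.2)
  simp only [wEx, if_pos hq]

lemma wEx_eventuallyEq_one {p : ℝ × ℝ} (h : √p.2 < p.1) : wEx =ᶠ[𝓝 p] fun _ => 1 := by
  filter_upwards [(isOpen_lt (continuous_sqrt.comp continuous_snd) continuous_fst).mem_nhds h]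
    with q (hq : √q.2 < q.1)
  have : ¬ q.1 < -√q.2 := by linarith [sqrt_nonneg q.2]
  simp only [wEx, if_neg this, if_pos hq]

lemma wEx_eventuallyEq_of_abs_lt {p : ℝ × ℝ} (h : |p.1| < √p.2) :
    wEx =ᶠ[𝓝 p] fun q => q.1 * (2 * √q.2)⁻¹ + 1 / 2 := by
  have hU : IsOpen {q : ℝ × ℝ | |q.1| < √q.2} :=
    isOpen_lt (continuous_abs.comp continuous_fst) (continuous_sqrt.comp continuous_snd)
  filter_upwards [hU.mem_nhds h] with q hq
  obtain ⟨hl, hr⟩ := abs_lt.1 hq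
  have hs : 0 < √q.2 := (abs_nonneg _).trans_lt hq
  simp only [wEx, if_neg hl.not_gt, if_neg hr.not_gt]
  field_simp

lemma fderiv_wEx_of_sqrt_lt_abs {p : ℝ × ℝ} (h : √p.2 < |p.1|) : fderiv ℝ wEx p = 0 := by
  rcases lt_abs.1 h with h | h
  · rw [(wEx_eventuallyEq_one h).fderiv_eq, fderiv_const_apply]
  · rw [(wEx_eventuallyEq_zero (lt_neg.1 h)).fderiv_eq, fderiv_const_apply]

lemma norm_fderiv_wEx_le {p : ℝ × ℝ} (hy : p.2 ≤ 1) (h : |p.1| < √p.2) :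
    ‖fderiv ℝ wEx p‖ ≤ p.2⁻¹ := by
  have hs : 0 < √p.2 := (abs_nonneg _).trans_lt h
  have hy0 : 0 < p.2 := sqrt_pos.1 hs
  have hinv : HasDerivAt (fun y => (2 * √y)⁻¹) (-(4 * p.2 * √p.2)⁻¹) p.2 := by
    refine (((hasDerivAt_sqrt hy0.ne').const_mul 2).inv (by positivity)).congr_deriv ?_
    field_simp
    rw [sq_sqrt hy0.le]
    ring
  have hD := ((hasFDerivAt_fst_mul_comp_snd hinv).add_const (1 / 2)).congr_of_eventuallyEq
    (wEx_eventuallyEq_of_abs_lt h)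
  rw [hD.fderiv]
  have hys : p.2 ≤ √p.2 := le_sqrt_of_sq_le (by nlinarith)
  calc ‖(2 * √p.2)⁻¹ • fst ℝ ℝ ℝ + (p.1 * -(4 * p.2 * √p.2)⁻¹) • snd ℝ ℝ ℝ‖
      ≤ (2 * √p.2)⁻¹ + |p.1| * (4 * p.2 * √p.2)⁻¹ := by
        refine (norm_smul_fst_add_smul_snd_le _ _).trans_eq ?_
        rw [norm_mul, norm_neg, norm_eq_abs, norm_eq_abs, norm_eq_abs,
          abs_of_pos (by positivity : 0 < (2 * √p.2)⁻¹),
          abs_of_pos (by positivity : 0 < (4 * p.2 * √p.2)⁻¹)]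
    _ ≤ (2 * p.2)⁻¹ + √p.2 * (4 * p.2 * √p.2)⁻¹ := by gcongr
    _ ≤ p.2⁻¹ := by
        field_simp
        linarith

lemma weighted_sq_norm_fderiv_wEx_le (κ : ℝ) {x y : ℝ} (hy : y ≤ 1) (hx : |x| ≠ √y) :
    y ^ (1 - 2 * κ) * ‖fderiv ℝ wEx (x, y)‖ ^ 2
      ≤ (Icc (-√y) √y).indicator (fun _ => y ^ (-1 - 2 * κ)) x := by
  rcases hx.lt_or_gt with hx | hx
  · have hy0 : 0 < y := sqrt_pos.1 ((abs_nonneg x).trans_lt hx)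
    rw [indicator_of_mem (show x ∈ Icc (-√y) √y from abs_le.1 hx.le),
      show -1 - 2 * κ = 1 - 2 * κ - 2 by ring, rpow_sub hy0 (1 - 2 * κ) 2, rpow_two,
      div_eq_mul_inv, ← inv_pow]
    gcongr
    exact norm_fderiv_wEx_le hy hx
  · rw [fderiv_wEx_of_sqrt_lt_abs hx, indicator_of_notMem
      (show x ∉ Icc (-√y) √y from fun h => hx.not_ge (abs_le.2 h))]
    simp

lemma lintegral_weighted_sq_norm_fderiv_wEx_le (κ : ℝ) {y : ℝ} (hy0 : 0 < y) (hy : y ≤ 1) :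
    ∫⁻ x, ENNReal.ofReal (y ^ (1 - 2 * κ) * ‖fderiv ℝ wEx (x, y)‖ ^ 2)
      ≤ ENNReal.ofReal (2 * y ^ (-1 / 2 - 2 * κ)) := by
  have hae : ∀ᵐ x : ℝ, |x| ≠ √y := by
    refine measure_mono_null (fun x hx => ?_) ((toFinite {√y, -√y}).measure_zero volume)
    rcases abs_eq (sqrt_nonneg y) |>.1 (not_not.1 hx) with h | h <;> simp [h]
  calc ∫⁻ x, ENNReal.ofReal (y ^ (1 - 2 * κ) * ‖fderiv ℝ wEx (x, y)‖ ^ 2)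
      ≤ ∫⁻ x, (Icc (-√y) √y).indicator (fun _ => ENNReal.ofReal (y ^ (-1 - 2 * κ))) x := by
        refine lintegral_mono_ae (hae.mono fun x hx => ?_)
        exact (ENNReal.ofReal_le_ofReal (weighted_sq_norm_fderiv_wEx_le κ hy hx)).trans_eq
          (congr_fun (indicator_comp_of_zero ENNReal.ofReal_zero) x).symm
    _ = ENNReal.ofReal (y ^ (-1 - 2 * κ) * (2 * √y)) := by
        rw [lintegral_indicator_const measurableSet_Icc, volume_Icc,
          ENNReal.ofReal_mul (by positivity)]
        ring_nf
    _ = ENNReal.ofReal (2 * y ^ (-1 / 2 - 2 * κ)) := by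
        rw [sqrt_eq_rpow, mul_left_comm, ← rpow_add hy0]
        ring_nf

theorem example_energy_finite_general (κ : ℝ) (hκ : κ < 1/4) (ε : ℝ) :
    (∫⁻ p in (Ioo (-ε) ε) ×ˢ (Ioo (0:ℝ) 1),
        ENNReal.ofReal (p.2 ^ (1 - 2 * κ) * ‖fderiv ℝ wEx p‖ ^ 2) ∂volume) < ⊤ := by
  have hmeas : Measurable fun p : ℝ × ℝ =>
      ENNReal.ofReal (p.2 ^ (1 - 2 * κ) * ‖fderiv ℝ wEx p‖ ^ 2) := by
    have := measurable_fderiv ℝ wEx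
    fun_prop
  have hint : IntegrableOn (fun y : ℝ => 2 * y ^ (-1 / 2 - 2 * κ)) (Ioo 0 1) :=
    ((intervalIntegral.integrableOn_Ioo_rpow_iff one_pos).2 (by linarith)).const_mul 2
  rw [Measure.volume_eq_prod, setLIntegral_prod_symm _ hmeas.aemeasurable]
  calc ∫⁻ y in Ioo 0 1, ∫⁻ x in Ioo (-ε) ε,
        ENNReal.ofReal (y ^ (1 - 2 * κ) * ‖fderiv ℝ wEx (x, y)‖ ^ 2)
      ≤ ∫⁻ y in Ioo 0 1, ENNReal.ofReal (2 * y ^ (-1 / 2 - 2 * κ)) :=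
        setLIntegral_mono (by fun_prop) fun y hy => (setLIntegral_le_lintegral _ _).trans
          (lintegral_weighted_sq_norm_fderiv_wEx_le κ hy.1 hy.2.le)
    _ < ⊤ := hint.lintegral_lt_top

/-- for any `κ ∈ (0, 1/4)` and `ε > 0`, the weighted Dirichlet energy
`∫_{|x|<ε} ∫₀^1 y^(1-2κ) |∇w(x,y)|² dy dx` of the piecewise function `wEx` is finite. -/
theorem example_energy_finite (κ : ℝ) (hκ0 : 0 < κ) (hκ : κ < 1/4) (ε : ℝ) (hε : 0 < ε) :
    (∫⁻ p in (Ioo (-ε) ε) ×ˢ (Ioo (0:ℝ) 1),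
        ENNReal.ofReal (p.2 ^ (1 - 2 * κ) * ‖fderiv ℝ wEx p‖ ^ 2) ∂volume) < ⊤ :=
  example_energy_finite_general κ hκ ε
end
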